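/- Suppose the $N$-particle log Sobolev constant $\lambda_{LSI}^N$ satisfies $\liminf_{N\to\infty} \lambda_{LSI}^N > 0$, and $E^{MF}$ admits a non-minimising critical point $\rho_*$ (i.e., $D(\rho_*)=0$ but $E^{MF}[\rho_*] > \inf E^{MF}$). Assume the scaled relative entropy satisfies $\lim_{N\to\infty} \overline{\mathcal{E}}(\rho_*^{\otimes N} | M_N) = E^{MF}[\rho_*] - \inf E^{MF} > 0$ and the scaled Fisher information satisfies $\overline{\mathcal{I}}(\rho_*^{\otimes N}|M_N) \le C/N$. Then this yields a contradiction; equivalently, under these convergence statements, $\lambda_{LSI}^N \le \frac{C'}{N}$ for some constant $C'$ and all sufficiently large $N$. -/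

import Mathlib

open Filter

/-- Degeneracy of the `N`-particle log Sobolev constant in the presence of a
non-minimising critical point of the mean-field free energy.  Since the product
measure `ρ_*^{⊗N}` is a competitor in the infimum defining `λ_LSI^N`, we have
`λ N * Ē N ≤ β⁻¹ Ī N` for each `N`, where `Ē N = Ē(ρ_*^{⊗N}|M_N)` and
`Ī N = Ī(ρ_*^{⊗N}|M_N)`.  If `Ē N → E^{MF}[ρ_*] - inf E^{MF} > 0` and
`Ī N ≤ C/N`, then `λ_LSI^N ≤ C'/N` for large `N` (so that
`liminf λ_LSI^N > 0` is contradictory). -/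
theorem stmt3 (β : ℝ) (hβ : 0 < β)
    (lam Ebar Ibar : ℕ → ℝ)
    (hE : ∀ n, 0 ≤ Ebar n) (hI : ∀ n, 0 ≤ Ibar n)
    -- the product measure is admissible in the LSI infimum
    (hLSI : ∀ n, lam n * Ebar n ≤ β⁻¹ * Ibar n)
    -- convergence of the scaled relative entropy to the positive energy gap
    (e₀ : ℝ) (he₀ : 0 < e₀)
    (hEconv : Tendsto Ebar atTop (nhds e₀))
    -- decay of the scaled relative Fisher information
    (C : ℝ) (hIbound : ∀ n : ℕ, 0 < n → Ibar n ≤ C / (n : ℝ)) :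
    ∃ C' : ℝ, ∃ N₀ : ℕ, ∀ n ≥ N₀, lam n ≤ C' / (n : ℝ) := by
  have hev : ∀ᶠ n in atTop, Ebar n > e₀ / 2 :=
    hEconv.eventually (eventually_gt_nhds (by linarith))
  obtain ⟨N₁, hN₁⟩ := hev.exists_forall_of_atTop
  have hC : 0 ≤ C := by have := le_trans (hI 1) (hIbound 1 one_pos); simpa using this
  refine ⟨β⁻¹ * C / (e₀ / 2), max N₁ 1, fun n hn => ?_⟩
  have hn1 : 1 ≤ n := le_trans (le_max_right _ _) hn
  have hnpos : 0 < n := hn1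
  have hEn : e₀ / 2 < Ebar n := hN₁ n (le_trans (le_max_left _ _) hn)
  have hEpos : 0 < Ebar n := lt_trans (by linarith) hEn
  have h1 : lam n ≤ β⁻¹ * Ibar n / Ebar n :=
    (le_div_iff₀ hEpos).2 (hLSI n)
  have hnR : (0:ℝ) < n := Nat.cast_pos.2 hnpos
  have h2 : β⁻¹ * Ibar n ≤ β⁻¹ * (C / n) :=
    mul_le_mul_of_nonneg_left (hIbound n hnpos) (inv_nonneg.2 hβ.le)
  have h3 : β⁻¹ * Ibar n / Ebar n ≤ β⁻¹ * (C / n) / (e₀ / 2) := by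
    apply div_le_div₀ (by positivity) h2 (by linarith) hEn.le
  calc lam n ≤ β⁻¹ * (C / n) / (e₀ / 2) := le_trans h1 h3
    _ = β⁻¹ * C / (e₀ / 2) / n := by field_simp
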